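/- Suppose q satisfies the latent-level treatment bridge equation E[q(Z,A,X) | σ(A,U,X)] = 1/P(A|σ(U,X)) a.s., proxy independence holds, T is conditionally independent of C given σ(A,X,Z,W), and G_t is a version of P(C > t | σ(A,X,Z,W)) with G_t > 0 a.s. Then for every a ∈ {0,1}, every t ∈ ℝ, and every bounded measurable function h̃ of (W,A,X), P(T(a) > t) = E[ 1{A=a}·q(Z,A,X)·(1{T>t}·1{C>t}/G_t − h̃(W,A,X)) + h̃(W,a,X) ]. (Censored-data proximal doubly robust identification when the treatment bridge is correct.) -/

import Mathlib

/-!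
Write `w = 1{A = a} q(Z,A,X)`. Conditioning first on `σ(A,U,X)` and then on `σ(U,X)`, the
treatment bridge gives `E[w | U,X] = E[1{A = a} | U,X] / P(A = a | U,X) = 1`. Proxy independence,
extended by a π-λ argument from functions of `(Z,A)` and `(W,T(a))` to functions that also involve
the common covariate `X`, then makes `w` an unbiased weight for every bounded function of
`(W, T(a), X)`. Independent censoring makes `1{C > t} / G t` an unbiased weight given
`(A,X,Z,W)`, so `E[w 1{T > t} 1{C > t} / G t] = E[w 1{T(a) > t}] = P(T(a) > t)`, using
`T = T(a)` on `{A = a}`. The `h̃` terms cancel since `w h̃(W,A,X) = w h̃(W,a,X)` has mean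
`E[h̃(W,a,X)]`.
-/

open MeasureTheory ProbabilityTheory

/-- Conditional independence of `F` and `G` given the σ-algebra `m`: all conditional
covariances of bounded measurable functionals of the two groups vanish. -/
def CondIndepGiven {Ω α β : Type*} [MeasurableSpace Ω] [MeasurableSpace α] [MeasurableSpace β]
    (P : Measure Ω) (m : MeasurableSpace Ω) (F : Ω → α) (G : Ω → β) : Prop :=
  ∀ (f : α → ℝ) (g : β → ℝ), Measurable f → Measurable g →
    (∃ C, ∀ x, |f x| ≤ C) → (∃ C, ∀ x, |g x| ≤ C) →
    (P[fun ω => f (F ω) * g (G ω)|m]) =ᵐ[P]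
      fun ω => (P[fun ω' => f (F ω')|m]) ω * (P[fun ω' => g (G ω')|m]) ω

theorem Set.abs_indicator_one_le {α : Type*} (s : Set α) (x : α) :
    |s.indicator (1 : α → ℝ) x| ≤ 1 := by
  by_cases hx : x ∈ s <;> simp [hx]

theorem abs_ite_one_zero_le (p : Prop) [Decidable p] : |if p then (1 : ℝ) else 0| ≤ 1 := by
  split_ifs <;> simp

theorem measurable_ite_lt_one_zero (t : ℝ) :
    Measurable fun x : ℝ => if t < x then (1 : ℝ) else 0 :=
  Measurable.ite measurableSet_Ioi measurable_const measurable_const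

theorem abs_ite_one_zero_mul_le {p : Prop} [Decidable p] {y C : ℝ} (h : |y| ≤ C) :
    |(if p then (1 : ℝ) else 0) * y| ≤ C := by
  rw [abs_mul]
  exact (mul_le_of_le_one_left (abs_nonneg _) (abs_ite_one_zero_le p)).trans h

theorem ite_one_zero_mul_mul_congr {p : Prop} [Decidable p] (c : ℝ) {y y' : ℝ}
    (h : p → y = y') :
    (if p then (1 : ℝ) else 0) * c * y = (if p then (1 : ℝ) else 0) * c * y' := by
  split_ifs with hp
  · rw [h hp]
  · simp

section PullOut

variable {Ω : Type*} {m mΩ : MeasurableSpace Ω} {P : Measure Ω} [IsFiniteMeasure P]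

theorem integral_mul_condExp (hm : m ≤ mΩ) {ζ Y : Ω → ℝ} (hζ : StronglyMeasurable[m] ζ)
    (hζY : Integrable (ζ * Y) P) (hY : Integrable Y P) :
    ∫ ω, ζ ω * (P[Y|m]) ω ∂P = ∫ ω, ζ ω * Y ω ∂P :=
  calc ∫ ω, ζ ω * (P[Y|m]) ω ∂P = ∫ ω, (P[ζ * Y|m]) ω ∂P :=
        integral_congr_ae (condExp_mul_of_stronglyMeasurable_left hζ hζY hY).symm
    _ = ∫ ω, ζ ω * Y ω ∂P := integral_condExp hm

end PullOut

section Rectangles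

variable {Ω α β : Type*} {mΩ : MeasurableSpace Ω} [MeasurableSpace α] [MeasurableSpace β]
  {P : Measure Ω}

theorem integral_map_withDensity_ofReal {γ : Type*} [MeasurableSpace γ] {ρ : Ω → ℝ}
    (hρ : AEMeasurable ρ P) {V : Ω → γ} (hV : Measurable V) {ψ : γ → ℝ} (hψ : Measurable ψ) :
    ∫ x, ψ x ∂(P.withDensity fun ω => ENNReal.ofReal (ρ ω)).map V
      = ∫ ω, ψ (V ω) * max (ρ ω) 0 ∂P := by
  rw [integral_map hV.aemeasurable hψ.aestronglyMeasurable,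
    integral_withDensity_eq_integral_toReal_smul₀ hρ.ennreal_ofReal
      (ae_of_all _ fun _ => ENNReal.ofReal_lt_top)]
  simp [ENNReal.toReal_ofReal', mul_comm]

theorem integral_mul_eq_integral_mul_posPart_sub_negPart {ρ g : Ω → ℝ} (hρ : Integrable ρ P)
    (hg : AEStronglyMeasurable g P) {C : ℝ} (hgC : ∀ᵐ ω ∂P, ‖g ω‖ ≤ C) :
    ∫ ω, g ω * ρ ω ∂P = ∫ ω, g ω * max (ρ ω) 0 ∂P - ∫ ω, g ω * max (-ρ ω) 0 ∂P := by
  rw [← integral_sub (hρ.pos_part.bdd_mul hg hgC) (hρ.neg_part.bdd_mul hg hgC)]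
  simp_rw [← mul_sub, max_zero_sub_max_neg_zero_eq_self]

/-- The positive and negative parts of `(ρ₁ - ρ₂) • P`, pushed forward by `(F, H)`, are finite
measures that agree on rectangles, hence coincide. -/
theorem integral_comp_mul_eq_of_rectangles {ρ₁ ρ₂ : Ω → ℝ} (hρ₁ : Integrable ρ₁ P)
    (hρ₂ : Integrable ρ₂ P) {F : Ω → α} {H : Ω → β} (hF : Measurable F) (hH : Measurable H)
    (hrect : ∀ s t, MeasurableSet s → MeasurableSet t →
      ∫ ω, (s ×ˢ t).indicator 1 (F ω, H ω) * ρ₁ ω ∂P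
        = ∫ ω, (s ×ˢ t).indicator 1 (F ω, H ω) * ρ₂ ω ∂P)
    {φ : α × β → ℝ} (hφ : Measurable φ) {C : ℝ} (hφC : ∀ x, |φ x| ≤ C) :
    ∫ ω, φ (F ω, H ω) * ρ₁ ω ∂P = ∫ ω, φ (F ω, H ω) * ρ₂ ω ∂P := by
  have hV : Measurable fun ω => (F ω, H ω) := hF.prodMk hH
  have hρ : Integrable (fun ω => ρ₁ ω - ρ₂ ω) P := hρ₁.sub hρ₂
  set νpos := (P.withDensity fun ω => ENNReal.ofReal (ρ₁ ω - ρ₂ ω)).map fun ω => (F ω, H ω)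
  set νneg := (P.withDensity fun ω => ENNReal.ofReal (-(ρ₁ ω - ρ₂ ω))).map fun ω => (F ω, H ω)
  have := isFiniteMeasure_withDensity_ofReal hρ.2
  have := isFiniteMeasure_withDensity_ofReal hρ.neg.2
  have hsplit : ∀ ψ : α × β → ℝ, Measurable ψ → ∀ Cψ, (∀ x, |ψ x| ≤ Cψ) →
      ∫ ω, ψ (F ω, H ω) * ρ₁ ω ∂P - ∫ ω, ψ (F ω, H ω) * ρ₂ ω ∂P
        = ∫ x, ψ x ∂νpos - ∫ x, ψ x ∂νneg := fun ψ hψ Cψ hψC => by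
    have hψV : AEStronglyMeasurable (fun ω => ψ (F ω, H ω)) P :=
      (hψ.comp hV).aestronglyMeasurable
    have hψVC : ∀ᵐ ω ∂P, ‖ψ (F ω, H ω)‖ ≤ Cψ := ae_of_all _ fun _ => hψC _
    rw [← integral_sub (hρ₁.bdd_mul hψV hψVC) (hρ₂.bdd_mul hψV hψVC),
      integral_map_withDensity_ofReal hρ.aemeasurable hV hψ,
      integral_map_withDensity_ofReal (ρ := fun ω => -(ρ₁ ω - ρ₂ ω)) hρ.aemeasurable.neg hV hψ,
      ← integral_mul_eq_integral_mul_posPart_sub_negPart hρ hψV hψVC]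
    simp only [mul_sub]
  have hν : νpos = νneg := by
    refine Measure.ext_prod fun {s t} hs ht => ?_
    have h := hsplit _ (measurable_one.indicator (hs.prod ht)) 1 (Set.abs_indicator_one_le _)
    rw [hrect s t hs ht, sub_self, integral_indicator_one (hs.prod ht),
      integral_indicator_one (hs.prod ht), measureReal_def, measureReal_def] at h
    exact (ENNReal.toReal_eq_toReal_iff' (measure_ne_top _ _) (measure_ne_top _ _)).1
      (sub_eq_zero.1 h.symm)
  rw [← sub_eq_zero, hsplit φ hφ C hφC, hν, sub_self]

end Rectangles

namespace CondIndepGiven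

variable {Ω α β δ : Type*} {m₀ mΩ : MeasurableSpace Ω} [MeasurableSpace α] [MeasurableSpace β]
  [MeasurableSpace δ] {P : Measure Ω} [IsFiniteMeasure P] {F : Ω → α} {G : Ω → β}

theorem integral_comp_mul_mul_comp (hm₀ : m₀ ≤ mΩ) (h : CondIndepGiven P m₀ F G)
    (hF : Measurable F) (hG : Measurable G) {ζ : Ω → ℝ} (hζ : StronglyMeasurable[m₀] ζ)
    {Cζ : ℝ} (hζC : ∀ ω, |ζ ω| ≤ Cζ) {f : α → ℝ} (hf : Measurable f) {Cf : ℝ}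
    (hfC : ∀ x, |f x| ≤ Cf) {g : β → ℝ} (hg : Measurable g) {Cg : ℝ} (hgC : ∀ x, |g x| ≤ Cg) :
    ∫ ω, f (F ω) * ζ ω * g (G ω) ∂P
      = ∫ ω, f (F ω) * ζ ω * (P[fun ω => g (G ω)|m₀]) ω ∂P := by
  set η := P[fun ω => g (G ω)|m₀]
  have hζm : Measurable ζ := hζ.measurable.mono hm₀ le_rfl
  have hfF : Integrable (fun ω => f (F ω)) P :=
    .of_bound (hf.comp hF).aestronglyMeasurable Cf (ae_of_all _ fun _ => hfC _)
  have hgG : Integrable (fun ω => g (G ω)) P :=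
    .of_bound (hg.comp hG).aestronglyMeasurable Cg (ae_of_all _ fun _ => hgC _)
  have hfg : Integrable (fun ω => f (F ω) * g (G ω)) P :=
    hgG.bdd_mul (hf.comp hF).aestronglyMeasurable (ae_of_all _ fun _ => hfC _)
  calc ∫ ω, f (F ω) * ζ ω * g (G ω) ∂P = ∫ ω, ζ ω * (f (F ω) * g (G ω)) ∂P := by
        congr 1; ext ω; ring
    _ = ∫ ω, ζ ω * (P[fun ω => f (F ω) * g (G ω)|m₀]) ω ∂P :=
        (integral_mul_condExp hm₀ hζ
          (hfg.bdd_mul hζm.aestronglyMeasurable (ae_of_all _ hζC)) hfg).symm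
    _ = ∫ ω, ζ ω * η ω * (P[fun ω => f (F ω)|m₀]) ω ∂P := by
        refine integral_congr_ae ?_
        filter_upwards [h f g hf hg ⟨Cf, hfC⟩ ⟨Cg, hgC⟩] with ω hω
        rw [hω]; ring
    _ = ∫ ω, ζ ω * η ω * f (F ω) ∂P := by
        refine integral_mul_condExp hm₀ (hζ.mul stronglyMeasurable_condExp) ?_ hfF
        exact (integrable_condExp.bdd_mul hζm.aestronglyMeasurable (ae_of_all _ hζC)).mul_bdd
          (hf.comp hF).aestronglyMeasurable (ae_of_all _ fun _ => hfC _)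
    _ = ∫ ω, f (F ω) * ζ ω * η ω ∂P := by
        congr 1; ext ω; ring

variable {X : Ω → δ}

theorem integral_comp_prod_mul_comp (hm₀ : m₀ ≤ mΩ) (h : CondIndepGiven P m₀ F G)
    (hF : Measurable F) (hG : Measurable G) (hX : Measurable[m₀] X) {f : α × δ → ℝ}
    (hf : Measurable f) {Cf : ℝ} (hfC : ∀ x, |f x| ≤ Cf) {g : β → ℝ} (hg : Measurable g)
    {Cg : ℝ} (hgC : ∀ x, |g x| ≤ Cg) :
    ∫ ω, f (F ω, X ω) * g (G ω) ∂P = ∫ ω, (P[fun ω => f (F ω, X ω)|m₀]) ω * g (G ω) ∂P := by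
  set η := P[fun ω => g (G ω)|m₀]
  set ξ := P[fun ω => f (F ω, X ω)|m₀]
  have hXΩ : Measurable X := hX.mono hm₀ le_rfl
  have hgG : Integrable (fun ω => g (G ω)) P :=
    .of_bound (hg.comp hG).aestronglyMeasurable Cg (ae_of_all _ fun _ => hgC _)
  have hfFX : Integrable (fun ω => f (F ω, X ω)) P :=
    .of_bound (hf.comp (hF.prodMk hXΩ)).aestronglyMeasurable Cf (ae_of_all _ fun _ => hfC _)
  have hrect : ∀ s t, MeasurableSet s → MeasurableSet t →
      ∫ ω, (s ×ˢ t).indicator 1 (F ω, X ω) * g (G ω) ∂P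
        = ∫ ω, (s ×ˢ t).indicator 1 (F ω, X ω) * η ω ∂P := fun s t hs ht => by
    simp only [Set.indicator_prod_one]
    exact integral_comp_mul_mul_comp hm₀ h hF hG
      ((measurable_one.indicator ht).comp hX).stronglyMeasurable
      (fun _ => Set.abs_indicator_one_le _ _) (measurable_one.indicator hs)
      (Set.abs_indicator_one_le _) hg hgC
  calc ∫ ω, f (F ω, X ω) * g (G ω) ∂P = ∫ ω, f (F ω, X ω) * η ω ∂P :=
        integral_comp_mul_eq_of_rectangles hgG integrable_condExp hF hXΩ hrect hf hfC
    _ = ∫ ω, η ω * ξ ω ∂P := by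
        simp_rw [mul_comm _ (η _)]
        exact (integral_mul_condExp hm₀ stronglyMeasurable_condExp
          (integrable_condExp.mul_bdd hfFX.1 (ae_of_all _ fun _ => hfC _)) hfFX).symm
    _ = ∫ ω, ξ ω * g (G ω) ∂P := by
        simp_rw [mul_comm (η _)]
        exact integral_mul_condExp hm₀ stronglyMeasurable_condExp
          (integrable_condExp.mul_bdd hgG.1 (ae_of_all _ fun _ => hgC _)) hgG

theorem integral_comp_prod_mul_comp_prod (hm₀ : m₀ ≤ mΩ) (h : CondIndepGiven P m₀ F G)
    (hF : Measurable F) (hG : Measurable G) (hX : Measurable[m₀] X) {f : α × δ → ℝ}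
    (hf : Measurable f) {Cf : ℝ} (hfC : ∀ x, |f x| ≤ Cf) {g : β × δ → ℝ} (hg : Measurable g)
    {Cg : ℝ} (hgC : ∀ x, |g x| ≤ Cg) :
    ∫ ω, f (F ω, X ω) * g (G ω, X ω) ∂P
      = ∫ ω, (P[fun ω => f (F ω, X ω)|m₀]) ω * g (G ω, X ω) ∂P := by
  set ξ := P[fun ω => f (F ω, X ω)|m₀]
  have hXΩ : Measurable X := hX.mono hm₀ le_rfl
  have hfFX : Integrable (fun ω => f (F ω, X ω)) P :=
    .of_bound (hf.comp (hF.prodMk hXΩ)).aestronglyMeasurable Cf (ae_of_all _ fun _ => hfC _)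
  have hrect : ∀ s t, MeasurableSet s → MeasurableSet t →
      ∫ ω, (s ×ˢ t).indicator 1 (G ω, X ω) * f (F ω, X ω) ∂P
        = ∫ ω, (s ×ˢ t).indicator 1 (G ω, X ω) * ξ ω ∂P := fun s t hs ht => by
    set f' : α × δ → ℝ := fun p => t.indicator 1 p.2 * f p
    have hf' : Measurable f' := ((measurable_one.indicator ht).comp measurable_snd).mul hf
    have hf'C : ∀ p, |f' p| ≤ Cf := fun p => by
      rw [abs_mul]
      exact (mul_le_of_le_one_left (abs_nonneg _) (Set.abs_indicator_one_le _ _)).trans (hfC p)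
    have hζ : StronglyMeasurable[m₀] fun ω => t.indicator (1 : δ → ℝ) (X ω) :=
      ((measurable_one.indicator ht).comp hX).stronglyMeasurable
    have hpull : P[fun ω => f' (F ω, X ω)|m₀] =ᵐ[P] fun ω => t.indicator 1 (X ω) * ξ ω :=
      condExp_mul_of_stronglyMeasurable_left hζ
        (hfFX.bdd_mul (hζ.measurable.mono hm₀ le_rfl).aestronglyMeasurable
          (ae_of_all _ fun _ => Set.abs_indicator_one_le _ _)) hfFX
    calc ∫ ω, (s ×ˢ t).indicator 1 (G ω, X ω) * f (F ω, X ω) ∂P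
        = ∫ ω, f' (F ω, X ω) * s.indicator 1 (G ω) ∂P := by
          congr 1; ext ω; simp only [f', Set.indicator_prod_one]; ring
      _ = ∫ ω, (P[fun ω => f' (F ω, X ω)|m₀]) ω * s.indicator 1 (G ω) ∂P :=
          integral_comp_prod_mul_comp hm₀ h hF hG hX hf' hf'C (measurable_one.indicator hs)
            (Set.abs_indicator_one_le _)
      _ = ∫ ω, (s ×ˢ t).indicator 1 (G ω, X ω) * ξ ω ∂P := by
          refine integral_congr_ae ?_
          filter_upwards [hpull] with ω hω
          rw [hω, Set.indicator_prod_one]; ring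
  simp_rw [mul_comm _ (g _)]
  exact integral_comp_mul_eq_of_rectangles hfFX integrable_condExp hG hXΩ hrect hg hgC

theorem integral_mul_comp_prod_eq_of_condExp_eq_one (hm₀ : m₀ ≤ mΩ) (h : CondIndepGiven P m₀ F G)
    (hF : Measurable F) (hG : Measurable G) (hX : Measurable[m₀] X) {f : α × δ → ℝ}
    (hf : Measurable f) {Cf : ℝ} (hfC : ∀ x, |f x| ≤ Cf)
    (hf1 : P[fun ω => f (F ω, X ω)|m₀] =ᵐ[P] 1) {g : β × δ → ℝ} (hg : Measurable g)
    {Cg : ℝ} (hgC : ∀ x, |g x| ≤ Cg) :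
    ∫ ω, f (F ω, X ω) * g (G ω, X ω) ∂P = ∫ ω, g (G ω, X ω) ∂P := by
  rw [h.integral_comp_prod_mul_comp_prod hm₀ hF hG hX hf hfC hg hgC]
  refine integral_congr_ae ?_
  filter_upwards [hf1] with ω hω
  rw [hω, Pi.one_apply, one_mul]

end CondIndepGiven

section Truncation

variable {Ω : Type*} {mΩ : MeasurableSpace Ω} {P : Measure Ω}

theorem integrable_min_natCast_mul {f D : Ω → ℝ} (hf : Integrable f P)
    (hD : AEStronglyMeasurable D P) (hD0 : 0 ≤ᵐ[P] D) (n : ℕ) :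
    Integrable (fun ω => min (D ω) n * f ω) P :=
  hf.bdd_mul (hD.inf aestronglyMeasurable_const) <| by
    filter_upwards [hD0] with ω hω
    rw [Real.norm_eq_abs, abs_of_nonneg (le_min hω n.cast_nonneg)]
    exact min_le_right _ _

theorem integrable_mul_of_forall_integral_min_mul_le {f D : Ω → ℝ} (hf : Integrable f P)
    (hf0 : 0 ≤ᵐ[P] f) (hD : AEStronglyMeasurable D P) (hD0 : 0 ≤ᵐ[P] D) {c : ℝ}
    (hc : ∀ n : ℕ, ∫ ω, min (D ω) n * f ω ∂P ≤ c) :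
    Integrable (fun ω => D ω * f ω) P := by
  have hDn := integrable_min_natCast_mul hf hD hD0
  have hsup : ∫⁻ ω, ENNReal.ofReal (D ω * f ω) ∂P
      = ⨆ n : ℕ, ∫⁻ ω, ENNReal.ofReal (min (D ω) n * f ω) ∂P := by
    rw [← lintegral_iSup' (fun n => (hDn n).aemeasurable.ennreal_ofReal)]
    · refine lintegral_congr_ae ?_
      filter_upwards [hf0] with ω hω
      refine le_antisymm (le_iSup_of_le ⌈D ω⌉₊ ?_) (iSup_le fun n => ?_)
      · rw [min_eq_left (Nat.le_ceil _)]
      · exact ENNReal.ofReal_le_ofReal (mul_le_mul_of_nonneg_right (min_le_left _ _) hω)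
    · filter_upwards [hf0] with ω hω n k hnk
      exact ENNReal.ofReal_le_ofReal
        (mul_le_mul_of_nonneg_right (min_le_min le_rfl (Nat.cast_le.2 hnk)) hω)
  refine ⟨hD.mul hf.1, ?_⟩
  rw [hasFiniteIntegral_iff_ofReal (by filter_upwards [hD0, hf0] with ω h h' using mul_nonneg h h'),
    hsup]
  refine lt_of_le_of_lt (iSup_le fun n => ?_) (ENNReal.ofReal_lt_top (r := c))
  rw [← ofReal_integral_eq_lintegral_ofReal (hDn n)
    (by filter_upwards [hD0, hf0] with ω h h' using mul_nonneg (le_min h n.cast_nonneg) h')]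
  exact ENNReal.ofReal_le_ofReal (hc n)

end Truncation

section InverseWeighting

variable {Ω : Type*} {m mΩ : MeasurableSpace Ω} {P : Measure Ω} [IsFiniteMeasure P]

theorem integrable_mul_of_integrable_mul_condExp (hm : m ≤ mΩ) {f D : Ω → ℝ}
    (hf : Integrable f P) (hf0 : 0 ≤ᵐ[P] f) (hD : StronglyMeasurable[m] D) (hD0 : 0 ≤ᵐ[P] D)
    (hDf : Integrable (fun ω => D ω * (P[f|m]) ω) P) :
    Integrable (fun ω => D ω * f ω) P := by
  have hDΩ : AEStronglyMeasurable D P := (hD.measurable.mono hm le_rfl).aestronglyMeasurable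
  refine integrable_mul_of_forall_integral_min_mul_le hf hf0 hDΩ hD0
    (c := ∫ ω, D ω * (P[f|m]) ω ∂P) fun n => ?_
  rw [← integral_mul_condExp hm (hD.measurable.min measurable_const).stronglyMeasurable
    (integrable_min_natCast_mul hf hDΩ hD0 n) hf]
  refine integral_mono_ae (integrable_min_natCast_mul integrable_condExp hDΩ hD0 n) hDf ?_
  filter_upwards [condExp_nonneg hf0] with ω hω
  exact mul_le_mul_of_nonneg_right (min_le_left _ _) hω

theorem integral_mul_mul_div_condExp (hm : m ≤ mΩ) {k R S G : Ω → ℝ}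
    (hk : StronglyMeasurable[m] k) {Ck : ℝ} (hkC : ∀ ω, |k ω| ≤ Ck) (hR : Measurable R) {CR : ℝ}
    (hRC : ∀ ω, |R ω| ≤ CR) (hS : Integrable S P) (hS0 : 0 ≤ᵐ[P] S)
    (hRS : P[fun ω => R ω * S ω|m] =ᵐ[P] fun ω => (P[R|m]) ω * (P[S|m]) ω)
    (hG : G =ᵐ[P] P[S|m]) (hGpos : ∀ᵐ ω ∂P, 0 < G ω) :
    Integrable (fun ω => k ω * (R ω * S ω / G ω)) P
      ∧ ∫ ω, k ω * (R ω * S ω / G ω) ∂P = ∫ ω, k ω * R ω ∂P := by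
  set D : Ω → ℝ := fun ω => ((P[S|m]) ω)⁻¹
  have hD : StronglyMeasurable[m] D := stronglyMeasurable_condExp.measurable.inv.stronglyMeasurable
  have hkm : AEStronglyMeasurable k P := (hk.measurable.mono hm le_rfl).aestronglyMeasurable
  have hDG : ∀ᵐ ω ∂P, D ω = (G ω)⁻¹ := by
    filter_upwards [hG] with ω hω
    rw [hω]
  have hDS0 : ∀ᵐ ω ∂P, D ω * (P[S|m]) ω = 1 := by
    filter_upwards [hG, hGpos] with ω hω hpos
    exact inv_mul_cancel₀ (hω ▸ hpos.ne')
  have hDS : Integrable (fun ω => D ω * S ω) P :=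
    integrable_mul_of_integrable_mul_condExp hm hS hS0 hD
      (by filter_upwards [hDG, hGpos] with ω hω hpos using hω ▸ (inv_pos.2 hpos).le)
      ((integrable_const 1).congr (by filter_upwards [hDS0] with ω hω using hω.symm))
  have hRS' : Integrable (fun ω => R ω * S ω) P :=
    hS.bdd_mul hR.aestronglyMeasurable (ae_of_all _ hRC)
  have hkDRS : Integrable (fun ω => k ω * D ω * (R ω * S ω)) P :=
    ((hDS.bdd_mul hR.aestronglyMeasurable (ae_of_all _ hRC)).bdd_mul hkm (ae_of_all _ hkC)).congr
      (ae_of_all _ fun ω => by ring)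
  have hquot : (fun ω => k ω * (R ω * S ω / G ω)) =ᵐ[P] fun ω => k ω * D ω * (R ω * S ω) := by
    filter_upwards [hDG] with ω hω
    rw [hω]; ring
  refine ⟨hkDRS.congr hquot.symm, ?_⟩
  calc ∫ ω, k ω * (R ω * S ω / G ω) ∂P = ∫ ω, k ω * D ω * (R ω * S ω) ∂P :=
        integral_congr_ae hquot
    _ = ∫ ω, k ω * D ω * (P[fun ω => R ω * S ω|m]) ω ∂P :=
        (integral_mul_condExp hm (hk.mul hD) hkDRS hRS').symm
    _ = ∫ ω, k ω * (P[R|m]) ω ∂P := by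
        refine integral_congr_ae ?_
        filter_upwards [hRS, hDS0] with ω hω hω'
        rw [hω]
        linear_combination k ω * (P[R|m]) ω * hω'
    _ = ∫ ω, k ω * R ω ∂P :=
        integral_mul_condExp hm hk
          ((Integrable.of_bound hR.aestronglyMeasurable CR (ae_of_all _ hRC)).bdd_mul hkm
            (ae_of_all _ hkC))
          (.of_bound hR.aestronglyMeasurable CR (ae_of_all _ hRC))

end InverseWeighting

theorem integral_comp_mul_inverse_censoring_weight {Ω γ : Type*} [mΩ : MeasurableSpace Ω]
    [MeasurableSpace γ] {P : Measure Ω} [IsFiniteMeasure P] {T C : Ω → ℝ} {V : Ω → γ}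
    (hT : Measurable T) (hC : Measurable C) (hV : Measurable V)
    (hTC : CondIndepGiven P (MeasurableSpace.comap V inferInstance) T C)
    {κ : γ → ℝ} (hκ : Measurable κ) {Cκ : ℝ} (hκC : ∀ x, |κ x| ≤ Cκ) {t : ℝ} {Gt : Ω → ℝ}
    (hGt : Gt =ᵐ[P] P[fun ω => if t < C ω then (1 : ℝ) else 0|
      MeasurableSpace.comap V inferInstance])
    (hGtpos : ∀ᵐ ω ∂P, 0 < Gt ω) :
    Integrable (fun ω => κ (V ω) *
        ((if t < T ω then (1 : ℝ) else 0) * (if t < C ω then (1 : ℝ) else 0) / Gt ω)) P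
      ∧ ∫ ω, κ (V ω) *
          ((if t < T ω then (1 : ℝ) else 0) * (if t < C ω then (1 : ℝ) else 0) / Gt ω) ∂P
        = ∫ ω, κ (V ω) * (if t < T ω then (1 : ℝ) else 0) ∂P := by
  have hind := measurable_ite_lt_one_zero t
  have hindC : ∀ x : ℝ, |if t < x then (1 : ℝ) else 0| ≤ 1 := fun x => abs_ite_one_zero_le _
  exact integral_mul_mul_div_condExp hV.comap_le
    (hκ.comp (Measurable.of_comap_le le_rfl)).stronglyMeasurable (fun _ => hκC _)
    (hind.comp hT) (fun _ => hindC _)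
    (.of_bound (hind.comp hC).aestronglyMeasurable 1 (ae_of_all _ fun _ => hindC _))
    (ae_of_all _ fun ω => show (0 : ℝ) ≤ if t < C ω then 1 else 0 by split_ifs <;> simp)
    (hTC _ _ hind hind ⟨1, hindC⟩ ⟨1, hindC⟩) hGt hGtpos

section TreatmentBridge

variable {Ω : Type*} {m₀ m₁ mΩ : MeasurableSpace Ω} {P : Measure Ω} [IsFiniteMeasure P]

theorem condExp_mul_eq_one_of_condExp_eq_inv (h01 : m₀ ≤ m₁) (h1 : m₁ ≤ mΩ) {κ Y s : Ω → ℝ}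
    (hκ : StronglyMeasurable[m₁] κ) {Cκ : ℝ} (hκC : ∀ ω, |κ ω| ≤ Cκ) (hY : Integrable Y P)
    (hs : StronglyMeasurable[m₀] s) (hs0 : ∀ᵐ ω ∂P, s ω ≠ 0)
    (hκs : P[κ|m₀] =ᵐ[P] s)
    (hbridge : (fun ω => κ ω * (P[Y|m₁]) ω) =ᵐ[P] fun ω => κ ω * (s ω)⁻¹) :
    P[fun ω => κ ω * Y ω|m₀] =ᵐ[P] 1 := by
  have hκm : AEStronglyMeasurable κ P := (hκ.measurable.mono h1 le_rfl).aestronglyMeasurable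
  have hinner : P[fun ω => κ ω * Y ω|m₁] =ᵐ[P] fun ω => κ ω * (s ω)⁻¹ :=
    (condExp_mul_of_stronglyMeasurable_left hκ (hY.bdd_mul hκm (ae_of_all _ hκC)) hY).trans
      hbridge
  have hκs' : Integrable (fun ω => κ ω * (s ω)⁻¹) P := integrable_condExp.congr hinner
  calc P[fun ω => κ ω * Y ω|m₀] =ᵐ[P] P[P[fun ω => κ ω * Y ω|m₁]|m₀] :=
        (condExp_condExp_of_le h01 h1).symm
    _ =ᵐ[P] P[fun ω => κ ω * (s ω)⁻¹|m₀] := condExp_congr_ae hinner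
    _ =ᵐ[P] fun ω => (P[κ|m₀]) ω * (s ω)⁻¹ :=
        condExp_mul_of_stronglyMeasurable_right hs.measurable.inv.stronglyMeasurable hκs'
          (.of_bound hκm Cκ (ae_of_all _ hκC))
    _ =ᵐ[P] 1 := by
        filter_upwards [hκs, hs0] with ω hω hω0
        rw [hω, Pi.one_apply, mul_inv_cancel₀ hω0]

theorem condExp_ite_eq_of_binary (hm₀ : m₀ ≤ mΩ) {A : Ω → ℝ} (hA : Measurable A)
    (hA01 : ∀ ω, A ω = 0 ∨ A ω = 1) {a : ℝ} (ha : a = 0 ∨ a = 1) :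
    P[fun ω => if A ω = a then (1 : ℝ) else 0|m₀]
      =ᵐ[P] fun ω => if a = 1 then (P[A|m₀]) ω else 1 - (P[A|m₀]) ω := by
  rcases ha with rfl | rfl
  · have hA' : Integrable A P := .of_bound hA.aestronglyMeasurable 1
      (ae_of_all _ fun ω => by rcases hA01 ω with h | h <;> simp [h])
    have hind : (fun ω => if A ω = 0 then (1 : ℝ) else 0) = (fun _ => 1) - A := by
      ext ω; rcases hA01 ω with h | h <;> simp [h]
    simp only [hind, zero_ne_one, if_false]
    filter_upwards [condExp_sub (integrable_const 1) hA' m₀] with ω hω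
    rw [hω, condExp_const hm₀]
    rfl
  · have hind : (fun ω => if A ω = 1 then (1 : ℝ) else 0) = A := by
      ext ω; rcases hA01 ω with h | h <;> simp [h]
    simp only [hind, if_true]
    rfl

end TreatmentBridge

theorem measurable_ite_eq_mul_comp {α 𝓧 𝓩 : Type*} [MeasurableSpace α] [MeasurableSpace 𝓧]
    [MeasurableSpace 𝓩] {q : 𝓩 × ℝ × 𝓧 → ℝ} (hq : Measurable q) {A : α → ℝ} {Z : α → 𝓩}
    {X : α → 𝓧} (hA : Measurable A) (hZ : Measurable Z) (hX : Measurable X) (a : ℝ) :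
    Measurable fun x => (if A x = a then (1 : ℝ) else 0) * q (Z x, A x, X x) :=
  (Measurable.ite (measurableSet_eq_fun hA measurable_const) measurable_const
    measurable_const).mul (hq.comp (hZ.prodMk (hA.prodMk hX)))

section ProximalIdentification

variable {Ω 𝓤 𝓧 𝓩 𝓦 : Type*} [mΩ : MeasurableSpace Ω] [MeasurableSpace 𝓤] [MeasurableSpace 𝓧]
  [MeasurableSpace 𝓩] [MeasurableSpace 𝓦] {P : Measure Ω} [IsFiniteMeasure P] {A : Ω → ℝ}
  {U : Ω → 𝓤} {X : Ω → 𝓧} {Z : Ω → 𝓩} {W : Ω → 𝓦} {π : Ω → ℝ} {q : 𝓩 × ℝ × 𝓧 → ℝ} {a : ℝ}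

theorem condExp_treatment_weight_eq_one (hA : Measurable A)
    (hU : Measurable U) (hX : Measurable X) (hZ : Measurable Z) (hA01 : ∀ ω, A ω = 0 ∨ A ω = 1)
    (hπver : π =ᵐ[P] P[A|MeasurableSpace.comap (fun ω => (U ω, X ω)) inferInstance])
    (hπpos : ∀ᵐ ω ∂P, 0 < π ω ∧ π ω < 1) (hq : Measurable q) {Cq : ℝ}
    (hqC : ∀ x, |q x| ≤ Cq)
    (hbridge : (P[(fun ω => q (Z ω, A ω, X ω))|
        MeasurableSpace.comap (fun ω => (A ω, U ω, X ω)) inferInstance])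
      =ᵐ[P] fun ω => (A ω * π ω + (1 - A ω) * (1 - π ω))⁻¹)
    (ha : a = 0 ∨ a = 1) :
    P[fun ω => (if A ω = a then (1 : ℝ) else 0) * q (Z ω, A ω, X ω)|
        MeasurableSpace.comap (fun ω => (U ω, X ω)) inferInstance] =ᵐ[P] 1 := by
  set m₀ := MeasurableSpace.comap (fun ω => (U ω, X ω)) inferInstance
  set m₁ := MeasurableSpace.comap (fun ω => (A ω, U ω, X ω)) inferInstance
  have hAUX : Measurable[m₁] fun ω => (A ω, U ω, X ω) := Measurable.of_comap_le le_rfl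
  have h1 : m₁ ≤ mΩ := (hA.prodMk (hU.prodMk hX)).comap_le
  have h01 : m₀ ≤ m₁ := (measurable_snd.comp hAUX).comap_le
  have hs : StronglyMeasurable[m₀] fun ω => if a = 1 then (P[A|m₀]) ω else 1 - (P[A|m₀]) ω := by
    split_ifs
    exacts [stronglyMeasurable_condExp, stronglyMeasurable_const.sub stronglyMeasurable_condExp]
  refine condExp_mul_eq_one_of_condExp_eq_inv h01 h1 (κ := fun ω => if A ω = a then 1 else 0)
    (Measurable.ite ((measurable_fst.comp hAUX) (measurableSet_singleton a)) measurable_const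
      measurable_const).stronglyMeasurable (Cκ := 1) (fun ω => by split_ifs <;> simp)
    (.of_bound (hq.comp (hZ.prodMk (hA.prodMk hX))).aestronglyMeasurable Cq
      (ae_of_all _ fun _ => hqC _)) hs ?_ (condExp_ite_eq_of_binary (h01.trans h1) hA hA01 ha) ?_
  · filter_upwards [hπver, hπpos] with ω hω hpos
    rcases ha with rfl | rfl <;> simp only [← hω] <;> norm_num <;> linarith
  -- on `{A = a}`, `A π + (1 - A) (1 - π)` is the propensity `P(A = a | U, X)` of the bridge
  · filter_upwards [hbridge, hπver] with ω hω hπ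
    by_cases hAa : A ω = a
    · rcases ha with rfl | rfl <;> simp [hAa, hω, ← hπ]
    · simp [hAa]

theorem integral_treatment_weight_mul (hA : Measurable A) (hU : Measurable U)
    (hX : Measurable X) (hZ : Measurable Z) (hW : Measurable W) (hA01 : ∀ ω, A ω = 0 ∨ A ω = 1)
    (hπver : π =ᵐ[P] P[A|MeasurableSpace.comap (fun ω => (U ω, X ω)) inferInstance])
    (hπpos : ∀ᵐ ω ∂P, 0 < π ω ∧ π ω < 1) (hq : Measurable q) {Cq : ℝ}
    (hqC : ∀ x, |q x| ≤ Cq)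
    (hbridge : (P[(fun ω => q (Z ω, A ω, X ω))|
        MeasurableSpace.comap (fun ω => (A ω, U ω, X ω)) inferInstance])
      =ᵐ[P] fun ω => (A ω * π ω + (1 - A ω) * (1 - π ω))⁻¹)
    (ha : a = 0 ∨ a = 1) {Ta : Ω → ℝ} (hTa : Measurable Ta)
    (hproxy : CondIndepGiven P (MeasurableSpace.comap (fun ω => (U ω, X ω)) inferInstance)
      (fun ω => (Z ω, A ω)) (fun ω => (W ω, Ta ω)))
    (g : (𝓦 × ℝ) × 𝓧 → ℝ) (hg : Measurable g) {Cg : ℝ} (hgC : ∀ x, |g x| ≤ Cg) :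
    ∫ ω, (if A ω = a then (1 : ℝ) else 0) * q (Z ω, A ω, X ω) * g ((W ω, Ta ω), X ω) ∂P
      = ∫ ω, g ((W ω, Ta ω), X ω) ∂P :=
  hproxy.integral_mul_comp_prod_eq_of_condExp_eq_one (hU.prodMk hX).comap_le (hZ.prodMk hA)
    (hW.prodMk hTa) (measurable_snd.comp (Measurable.of_comap_le le_rfl))
    (measurable_ite_eq_mul_comp hq (measurable_snd.comp measurable_fst)
      (measurable_fst.comp measurable_fst) measurable_snd a)
    (fun _ => abs_ite_one_zero_mul_le (hqC _))
    (condExp_treatment_weight_eq_one hA hU hX hZ hA01 hπver hπpos hq hqC hbridge ha) hg hgC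

end ProximalIdentification

theorem integral_mul_sub_add_eq_of_weighting {Ω : Type*} {mΩ : MeasurableSpace Ω}
    {P : Measure Ω} {w Y h ha : Ω → ℝ} {c : ℝ} (hwY : Integrable (fun ω => w ω * Y ω) P)
    (hw : AEStronglyMeasurable w P) {Cw : ℝ} (hwC : ∀ ω, |w ω| ≤ Cw) (hha : Integrable ha P)
    (hY : ∫ ω, w ω * Y ω ∂P = c) (hwha : ∫ ω, w ω * ha ω ∂P = ∫ ω, ha ω ∂P)
    (hh : ∀ ω, w ω * h ω = w ω * ha ω) :
    ∫ ω, w ω * (Y ω - h ω) + ha ω ∂P = c := by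
  have hwha' : Integrable (fun ω => w ω * ha ω) P := hha.bdd_mul hw (ae_of_all _ hwC)
  calc ∫ ω, w ω * (Y ω - h ω) + ha ω ∂P = ∫ ω, (w ω * Y ω - w ω * ha ω) + ha ω ∂P := by
        congr 1; ext ω; rw [mul_sub, hh]
    _ = c := by
        rw [integral_add _ hha, integral_sub hwY hwha', hY, hwha]
        · ring
        · exact hwY.sub hwha'

theorem censored_doubly_robust_under_treatment_bridge_general
    {Ω 𝓤 𝓧 𝓩 𝓦 : Type*} [MeasurableSpace Ω]
    [MeasurableSpace 𝓤] [MeasurableSpace 𝓧]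
    [MeasurableSpace 𝓩] [MeasurableSpace 𝓦]
    (P : Measure Ω) [IsProbabilityMeasure P]
    -- the random variables
    (A : Ω → ℝ) (T1 T0 : Ω → ℝ) (C : Ω → ℝ) (U : Ω → 𝓤) (X : Ω → 𝓧) (Z : Ω → 𝓩) (W : Ω → 𝓦)
    (hA : Measurable A) (hT1 : Measurable T1) (hT0 : Measurable T0) (hC : Measurable C)
    (hU : Measurable U) (hX : Measurable X) (hZ : Measurable Z) (hW : Measurable W)
    (hA01 : ∀ ω, A ω = 0 ∨ A ω = 1)
    -- observed outcome (consistency)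
    (T : Ω → ℝ) (hT : ∀ ω, T ω = A ω * T1 ω + (1 - A ω) * T0 ω)
    -- positivity for a version `π` of `P(A = 1 | σ(U, X))`
    (π : Ω → ℝ)
    (hπver : π =ᵐ[P] P[A|MeasurableSpace.comap (fun ω => (U ω, X ω)) inferInstance])
    (hπpos : ∀ᵐ ω ∂P, 0 < π ω ∧ π ω < 1)
    -- `q` is a bounded measurable function of `(Z, A, X)`
    (q : 𝓩 × ℝ × 𝓧 → ℝ) (hq : Measurable q) (hqbdd : ∃ Cq, ∀ x, |q x| ≤ Cq)
    -- latent-level treatment bridge equation: `E[q(Z,A,X) | σ(A,U,X)] = 1/P(A|σ(U,X))` a.s.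
    (hbridge : (P[(fun ω => q (Z ω, A ω, X ω))|
        MeasurableSpace.comap (fun ω => (A ω, U ω, X ω)) inferInstance])
      =ᵐ[P] fun ω => (A ω * π ω + (1 - A ω) * (1 - π ω))⁻¹)
    -- proxy independence: `(Z, A) ⟂ (W, T(a)) | σ(U, X)` for `a = 1, 0`
    (hproxy1 : CondIndepGiven P (MeasurableSpace.comap (fun ω => (U ω, X ω)) inferInstance)
      (fun ω => (Z ω, A ω)) (fun ω => (W ω, T1 ω)))
    (hproxy0 : CondIndepGiven P (MeasurableSpace.comap (fun ω => (U ω, X ω)) inferInstance)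
      (fun ω => (Z ω, A ω)) (fun ω => (W ω, T0 ω)))
    -- independent censoring: `T ⟂ C | σ(A, X, Z, W)`
    (hTC : CondIndepGiven P
      (MeasurableSpace.comap (fun ω => (A ω, X ω, Z ω, W ω)) inferInstance) T C)
    -- `G t` is a version of `P(C > t | σ(A, X, Z, W))` with `G t > 0` a.s.
    (G : ℝ → Ω → ℝ)
    (hGver : ∀ t : ℝ, G t =ᵐ[P] P[(fun ω => if t < C ω then (1 : ℝ) else 0)|
        MeasurableSpace.comap (fun ω => (A ω, X ω, Z ω, W ω)) inferInstance])
    (hGpos : ∀ t : ℝ, ∀ᵐ ω ∂P, 0 < G t ω) :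
    ∀ a : ℝ, (a = 0 ∨ a = 1) → ∀ t : ℝ,
      ∀ htil : 𝓦 × ℝ × 𝓧 → ℝ, Measurable htil → (∃ Ch, ∀ x, |htil x| ≤ Ch) →
        (P {ω | t < (if a = 1 then T1 ω else T0 ω)}).toReal
          = ∫ ω, (if A ω = a then (1 : ℝ) else 0) * q (Z ω, A ω, X ω) *
                ((if t < T ω then (1 : ℝ) else 0) * (if t < C ω then (1 : ℝ) else 0)
                    / G t ω
                  - htil (W ω, A ω, X ω))
              + htil (W ω, a, X ω) ∂P := by
  intro a ha t htil hhtil ⟨Ch, hCh⟩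
  obtain ⟨Cq, hCq⟩ := hqbdd
  set Ta : Ω → ℝ := fun ω => if a = 1 then T1 ω else T0 ω
  have hTa : Measurable Ta := by by_cases h : a = 1 <;> simp [Ta, h, hT1, hT0]
  have hTTa : ∀ ω, A ω = a → T ω = Ta ω := fun ω hAa => by
    rcases ha with rfl | rfl <;> simp [Ta, hT, hAa]
  have hproxy : CondIndepGiven P (MeasurableSpace.comap (fun ω => (U ω, X ω)) inferInstance)
      (fun ω => (Z ω, A ω)) (fun ω => (W ω, Ta ω)) := by
    rcases ha with rfl | rfl <;> simpa [Ta]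
  have hweight := integral_treatment_weight_mul hA hU hX hZ hW hA01 hπver hπpos hq hCq hbridge ha
    hTa hproxy
  obtain ⟨hint, hipcw⟩ := integral_comp_mul_inverse_censoring_weight
    (by rw [show T = _ from funext hT]; fun_prop) hC (hA.prodMk (hX.prodMk (hZ.prodMk hW))) hTC
    (κ := fun p => (if p.1 = a then (1 : ℝ) else 0) * q (p.2.2.1, p.1, p.2.1))
    (measurable_ite_eq_mul_comp hq measurable_fst (by fun_prop) (by fun_prop) a)
    (fun _ => abs_ite_one_zero_mul_le (hCq _)) (hGver t) (hGpos t)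
  dsimp only at hint hipcw
  symm
  refine integral_mul_sub_add_eq_of_weighting hint
    (measurable_ite_eq_mul_comp hq hA hZ hX a).aestronglyMeasurable
    (fun _ => abs_ite_one_zero_mul_le (hCq _))
    (.of_bound (hhtil.comp (hW.prodMk (measurable_const.prodMk hX))).aestronglyMeasurable Ch
      (ae_of_all _ fun _ => hCh _))
    ?_ (hweight (fun p => htil (p.1.1, a, p.2)) (by fun_prop) (fun _ => hCh _))
    fun ω => ite_one_zero_mul_mul_congr _ fun hAa => by rw [hAa]
  rw [hipcw, integral_congr_ae (ae_of_all _ fun ω =>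
      ite_one_zero_mul_mul_congr _ fun hAa => by rw [hTTa ω hAa]),
    hweight (fun p => if t < p.1.2 then 1 else 0)
      ((measurable_ite_lt_one_zero t).comp (by fun_prop)) (fun _ => abs_ite_one_zero_le _),
    ← measureReal_def, ← integral_indicator_one (measurableSet_lt measurable_const hTa)]
  rfl

/-- **Censored-data proximal doubly robust identification when the treatment bridge is
correct.** If `q` solves the latent-level treatment bridge equation, proxy independence
holds, `T ⟂ C | σ(A,X,Z,W)`, and `G t` is a positive version of `P(C > t | σ(A,X,Z,W))`,
then for every `a ∈ {0,1}`, `t ∈ ℝ`, and bounded measurable `h̃` of `(W,A,X)`,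
`P(T(a) > t) = E[ 1{A = a} ⬝ q(Z,A,X) ⬝ (1{T > t} ⬝ 1{C > t}/G t − h̃(W,A,X)) + h̃(W,a,X) ]`. -/
theorem censored_doubly_robust_under_treatment_bridge
    {Ω 𝓤 𝓧 𝓩 𝓦 : Type*} [MeasurableSpace Ω]
    [MeasurableSpace 𝓤] [StandardBorelSpace 𝓤] [MeasurableSpace 𝓧] [StandardBorelSpace 𝓧]
    [MeasurableSpace 𝓩] [StandardBorelSpace 𝓩] [MeasurableSpace 𝓦] [StandardBorelSpace 𝓦]
    (P : Measure Ω) [IsProbabilityMeasure P]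
    -- the random variables
    (A : Ω → ℝ) (T1 T0 : Ω → ℝ) (C : Ω → ℝ) (U : Ω → 𝓤) (X : Ω → 𝓧) (Z : Ω → 𝓩) (W : Ω → 𝓦)
    (hA : Measurable A) (hT1 : Measurable T1) (hT0 : Measurable T0) (hC : Measurable C)
    (hU : Measurable U) (hX : Measurable X) (hZ : Measurable Z) (hW : Measurable W)
    (hA01 : ∀ ω, A ω = 0 ∨ A ω = 1)
    -- observed outcome (consistency)
    (T : Ω → ℝ) (hT : ∀ ω, T ω = A ω * T1 ω + (1 - A ω) * T0 ω)
    -- positivity for a version `π` of `P(A = 1 | σ(U, X))`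
    (π : Ω → ℝ)
    (hπver : π =ᵐ[P] P[A|MeasurableSpace.comap (fun ω => (U ω, X ω)) inferInstance])
    (hπpos : ∀ᵐ ω ∂P, 0 < π ω ∧ π ω < 1)
    -- `q` is a bounded measurable function of `(Z, A, X)`
    (q : 𝓩 × ℝ × 𝓧 → ℝ) (hq : Measurable q) (hqbdd : ∃ Cq, ∀ x, |q x| ≤ Cq)
    -- latent-level treatment bridge equation: `E[q(Z,A,X) | σ(A,U,X)] = 1/P(A|σ(U,X))` a.s.
    (hbridge : (P[(fun ω => q (Z ω, A ω, X ω))|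
        MeasurableSpace.comap (fun ω => (A ω, U ω, X ω)) inferInstance])
      =ᵐ[P] fun ω => (A ω * π ω + (1 - A ω) * (1 - π ω))⁻¹)
    -- proxy independence: `(Z, A) ⟂ (W, T(a)) | σ(U, X)` for `a = 1, 0`
    (hproxy1 : CondIndepGiven P (MeasurableSpace.comap (fun ω => (U ω, X ω)) inferInstance)
      (fun ω => (Z ω, A ω)) (fun ω => (W ω, T1 ω)))
    (hproxy0 : CondIndepGiven P (MeasurableSpace.comap (fun ω => (U ω, X ω)) inferInstance)
      (fun ω => (Z ω, A ω)) (fun ω => (W ω, T0 ω)))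
    -- independent censoring: `T ⟂ C | σ(A, X, Z, W)`
    (hTC : CondIndepGiven P
      (MeasurableSpace.comap (fun ω => (A ω, X ω, Z ω, W ω)) inferInstance) T C)
    -- `G t` is a version of `P(C > t | σ(A, X, Z, W))` with `G t > 0` a.s.
    (G : ℝ → Ω → ℝ)
    (hGver : ∀ t : ℝ, G t =ᵐ[P] P[(fun ω => if t < C ω then (1 : ℝ) else 0)|
        MeasurableSpace.comap (fun ω => (A ω, X ω, Z ω, W ω)) inferInstance])
    (hGpos : ∀ t : ℝ, ∀ᵐ ω ∂P, 0 < G t ω) :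
    ∀ a : ℝ, (a = 0 ∨ a = 1) → ∀ t : ℝ,
      ∀ htil : 𝓦 × ℝ × 𝓧 → ℝ, Measurable htil → (∃ Ch, ∀ x, |htil x| ≤ Ch) →
        (P {ω | t < (if a = 1 then T1 ω else T0 ω)}).toReal
          = ∫ ω, (if A ω = a then (1 : ℝ) else 0) * q (Z ω, A ω, X ω) *
                ((if t < T ω then (1 : ℝ) else 0) * (if t < C ω then (1 : ℝ) else 0)
                    / G t ω
                  - htil (W ω, A ω, X ω))
              + htil (W ω, a, X ω) ∂P :=
  censored_doubly_robust_under_treatment_bridge_general P A T1 T0 C U X Z W hA hT1 hT0 hC hU hX hZ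
    hW hA01 T hT π hπver hπpos q hq hqbdd hbridge hproxy1 hproxy0 hTC G hGver hGpos
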